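/- Let t > 0 and set V(z) = t²y⁴|φ(z)|². Let f₁, f₂ : ℝ → ℝ be continuous functions satisfying: f₁(s) = 1 − e^{2s} for s ≤ 0 and f₁(s) < 0 for all s > 0; f₂(s) = s − e^{−2s} for s ≤ 0 and f₂(s) ≤ 0 for all s ∈ ℝ. Then a Γ-invariant C² function u : ℍ → ℝ solves the Gauss equation Δu + 1 − e^{2u} − V(z)e^{−2u} = 0 if and only if it solves the modified equation Δu − V(z)·u + f₁(u) + V(z)·f₂(u) = 0; i.e., the solution sets of the two equations coincide. -/

import Mathlib

/-!
Both equations force `u ≤ 0`, and for nonpositive arguments `f₁` and `f₂` are exactly the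
nonlinearities of the Gauss equation, so the two equations coincide. By cocompactness the
`Γ`-invariant function `u` attains its maximum over `ℍ` at some `z₀`, where `Δu(z₀) ≤ 0`. If `u(z₀)`
were positive, every remaining term of either equation at `z₀` would be `≤ 0` and one of them `< 0`.
-/

open Complex MeasureTheory Real Filter

noncomputable section

/-- The upper half-plane, viewed as a subset of `ℂ`. -/
def UH : Set ℂ := {z : ℂ | 0 < z.im}

/-- The Möbius action of `SL(2, ℝ)` on the upper half-plane (as a map on `ℂ`). -/
def moebius (γ : Matrix.SpecialLinearGroup (Fin 2) ℝ) (z : ℂ) : ℂ :=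
  (((γ 0 0 : ℝ) : ℂ) * z + ((γ 0 1 : ℝ) : ℂ)) / (((γ 1 0 : ℝ) : ℂ) * z + ((γ 1 1 : ℝ) : ℂ))

/-- The hyperbolic Laplacian `Δu = y² (∂²u/∂x² + ∂²u/∂y²)`. -/
def hypLap (u : ℂ → ℝ) (z : ℂ) : ℝ :=
  z.im ^ 2 * (iteratedFDeriv ℝ 2 u z ![1, 1] + iteratedFDeriv ℝ 2 u z ![Complex.I, Complex.I])

/-- The squared Euclidean gradient `|∇u|² = (∂u/∂x)² + (∂u/∂y)²`. -/
def gradSq (u : ℂ → ℝ) (z : ℂ) : ℝ :=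
  (fderiv ℝ u z 1) ^ 2 + (fderiv ℝ u z Complex.I) ^ 2

/-- `u` is invariant under the Möbius action of the subgroup `Γ` on the upper half-plane. -/
def GammaInv (Γ : Subgroup (Matrix.SpecialLinearGroup (Fin 2) ℝ)) (u : ℂ → ℝ) : Prop :=
  ∀ γ ∈ Γ, ∀ z ∈ UH, u (moebius γ z) = u z

/-- The Gauss equation `Δu + 1 - e^{2u} - t² y⁴ |φ(z)|² e^{-2u} = 0` on the upper half-plane. -/
def GaussEq (φ : ℂ → ℂ) (t : ℝ) (u : ℂ → ℝ) : Prop :=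
  ∀ z ∈ UH, hypLap u z + 1 - Real.exp (2 * u z)
    - t ^ 2 * z.im ^ 4 * ‖φ z‖ ^ 2 * Real.exp (-2 * u z) = 0

/-- Integral over a fundamental domain `D` with respect to the hyperbolic
area measure `dμ = y⁻² dx dy`. -/
def hInt (D : Set ℂ) (f : ℂ → ℝ) : ℝ := ∫ z in D, f z * (z.im ^ 2)⁻¹

open Topology InnerProductSpace Laplacian

theorem IsLocalMax.deriv_deriv_nonpos {f : ℝ → ℝ} {x₀ : ℝ} (h : IsLocalMax f x₀)
    (hc : ContinuousAt f x₀) : deriv (deriv f) x₀ ≤ 0 := by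
  -- If `f'' > 0`, the second-derivative test makes `x₀` a local minimum as well, so `f` is
  -- locally constant and `f'' = 0`.
  by_contra! hpos
  have hmin : IsLocalMin f x₀ := isLocalMin_of_deriv_deriv_pos hpos h.deriv_eq_zero hc
  have hconst : f =ᶠ[𝓝 x₀] fun _ ↦ f x₀ :=
    (h.and hmin).mono fun _ hx ↦ le_antisymm hx.1 hx.2
  have hderiv : deriv f =ᶠ[𝓝 x₀] fun _ ↦ 0 := hconst.deriv.trans (by simp)
  simp [hderiv.deriv_eq] at hpos

theorem IsLocalMax.iteratedFDeriv_two_apply_self_nonpos {E : Type*} [NormedAddCommGroup E]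
    [NormedSpace ℝ E] {u : E → ℝ} {z₀ : E} (h : IsLocalMax u z₀) (hu : ContDiffAt ℝ 2 u z₀)
    (v : E) : iteratedFDeriv ℝ 2 u z₀ ![v, v] ≤ 0 := by
  set line : ℝ → E := fun s ↦ z₀ + s • v
  have hline : ∀ s, HasDerivAt line v s := fun s ↦ by
    simpa [line] using ((hasDerivAt_id s).smul_const v).const_add z₀
  have hline0 : line 0 = z₀ := by simp [line]
  have hnear : ∀ᶠ s in 𝓝 (0 : ℝ), DifferentiableAt ℝ u (line s) := by
    rw [← hline0] at hu
    exact (hline 0).continuousAt.eventually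
      ((hu.eventually (by simp)).mono fun _ hx ↦ hx.differentiableAt two_ne_zero)
  have hderiv : deriv (u ∘ line) =ᶠ[𝓝 0] fun s ↦ fderiv ℝ u (line s) v :=
    hnear.mono fun s hs ↦ (hs.hasFDerivAt.comp_hasDerivAt s (hline s)).deriv
  have hsecond : HasDerivAt (fun s ↦ fderiv ℝ u (line s) v) (fderiv ℝ (fderiv ℝ u) z₀ v v) 0 := by
    have hB := ((hu.fderiv_right (m := 1) le_rfl).differentiableAt one_ne_zero).hasFDerivAt
    rw [← hline0] at hB ⊢
    simpa using (hB.comp_hasDerivAt 0 (hline 0)).clm_apply (hasDerivAt_const 0 v)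
  have hmax : IsLocalMax (u ∘ line) 0 := by
    rw [← hline0] at h
    exact h.comp_continuous (hline 0).continuousAt
  have := hmax.deriv_deriv_nonpos (hu.continuousAt.comp_of_eq (hline 0).continuousAt hline0)
  rw [hderiv.deriv_eq, hsecond.deriv] at this
  simpa [iteratedFDeriv_two_apply] using this

theorem IsLocalMax.laplacian_nonpos {E : Type*} [NormedAddCommGroup E] [InnerProductSpace ℝ E]
    [FiniteDimensional ℝ E] {u : E → ℝ} {z₀ : E} (h : IsLocalMax u z₀)
    (hu : ContDiffAt ℝ 2 u z₀) : Δ u z₀ ≤ 0 := by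
  rw [laplacian_eq_iteratedFDeriv_stdOrthonormalBasis]
  exact Finset.sum_nonpos fun i _ ↦ h.iteratedFDeriv_two_apply_self_nonpos hu _

theorem hypLap_eq_im_sq_mul_laplacian (u : ℂ → ℝ) (z : ℂ) : hypLap u z = z.im ^ 2 * Δ u z := by
  rw [hypLap, laplacian_eq_iteratedFDeriv_complexPlane]

theorem IsLocalMax.hypLap_nonpos {u : ℂ → ℝ} {z₀ : ℂ} (h : IsLocalMax u z₀)
    (hu : ContDiffAt ℝ 2 u z₀) : hypLap u z₀ ≤ 0 := by
  rw [hypLap_eq_im_sq_mul_laplacian]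
  exact mul_nonpos_of_nonneg_of_nonpos (sq_nonneg _) (h.laplacian_nonpos hu)

theorem isOpen_UH : IsOpen UH :=
  isOpen_lt continuous_const Complex.continuous_im

theorem GammaInv.exists_isMaxOn {Γ : Subgroup (Matrix.SpecialLinearGroup (Fin 2) ℝ)}
    {u : ℂ → ℝ} (hinv : GammaInv Γ u) (hu : ContinuousOn u UH) {K : Set ℂ} (hKU : K ⊆ UH)
    (hK : IsCompact K) (hcover : ∀ z ∈ UH, ∃ γ ∈ Γ, moebius γ z ∈ K) :
    ∃ z₀ ∈ UH, IsMaxOn u UH z₀ := by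
  have hKne : K.Nonempty := by
    obtain ⟨γ, -, hγ⟩ := hcover Complex.I (by simp [UH])
    exact ⟨_, hγ⟩
  obtain ⟨z₀, hz₀, hmax⟩ := hK.exists_isMaxOn hKne (hu.mono hKU)
  refine ⟨z₀, hKU hz₀, fun z hz ↦ ?_⟩
  obtain ⟨γ, hγ, hγK⟩ := hcover z hz
  calc u z = u (moebius γ z) := (hinv γ hγ z hz).symm
    _ ≤ u z₀ := hmax hγK

theorem nonpos_of_gauss_eq {Δu V s : ℝ} (hΔ : Δu ≤ 0) (hV : 0 ≤ V)
    (h : Δu + 1 - Real.exp (2 * s) - V * Real.exp (-2 * s) = 0) : s ≤ 0 := by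
  by_contra! hs
  have h₁ : 1 < Real.exp (2 * s) := Real.one_lt_exp_iff.2 (by linarith)
  have h₂ : 0 ≤ V * Real.exp (-2 * s) := by positivity
  linarith

theorem nonpos_of_modified_eq {f₁ f₂ : ℝ → ℝ} (hf₁neg : ∀ s > (0 : ℝ), f₁ s < 0)
    (hf₂nonpos : ∀ s : ℝ, f₂ s ≤ 0) {Δu V s : ℝ} (hΔ : Δu ≤ 0) (hV : 0 ≤ V)
    (h : Δu - V * s + f₁ s + V * f₂ s = 0) : s ≤ 0 := by
  by_contra! hs
  have h₁ := hf₁neg s hs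
  have h₂ : 0 ≤ V * s := mul_nonneg hV hs.le
  have h₃ : V * f₂ s ≤ 0 := mul_nonpos_of_nonneg_of_nonpos hV (hf₂nonpos s)
  linarith

theorem modified_lhs_eq_gauss_lhs {f₁ f₂ : ℝ → ℝ}
    (hf₁eq : ∀ s ≤ (0 : ℝ), f₁ s = 1 - Real.exp (2 * s))
    (hf₂eq : ∀ s ≤ (0 : ℝ), f₂ s = s - Real.exp (-2 * s)) {s : ℝ} (hs : s ≤ 0) (Δu V : ℝ) :
    Δu - V * s + f₁ s + V * f₂ s = Δu + 1 - Real.exp (2 * s) - V * Real.exp (-2 * s) := by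
  rw [hf₁eq s hs, hf₂eq s hs]
  ring

theorem gauss_equation_equivalent_to_modified_equation_general
    (Γ : Subgroup (Matrix.SpecialLinearGroup (Fin 2) ℝ))
    (hcocompact : ∃ K : Set ℂ, K ⊆ UH ∧ IsCompact K ∧ ∀ z ∈ UH, ∃ γ ∈ Γ, moebius γ z ∈ K)
    (φ : ℂ → ℂ)
    (t : ℝ)
    (f₁ f₂ : ℝ → ℝ)
    (hf₁eq : ∀ s ≤ (0 : ℝ), f₁ s = 1 - Real.exp (2 * s))
    (hf₁neg : ∀ s > (0 : ℝ), f₁ s < 0)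
    (hf₂eq : ∀ s ≤ (0 : ℝ), f₂ s = s - Real.exp (-2 * s))
    (hf₂nonpos : ∀ s : ℝ, f₂ s ≤ 0)
    (u : ℂ → ℝ) (hu : ContDiffOn ℝ 2 u UH) (huinv : GammaInv Γ u) :
    GaussEq φ t u ↔
      ∀ z ∈ UH, hypLap u z - (t ^ 2 * z.im ^ 4 * ‖φ z‖ ^ 2) * u z
        + f₁ (u z) + (t ^ 2 * z.im ^ 4 * ‖φ z‖ ^ 2) * f₂ (u z) = 0 := by
  obtain ⟨K, hKU, hK, hcover⟩ := hcocompact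
  obtain ⟨z₀, hz₀, hmax⟩ := huinv.exists_isMaxOn hu.continuousOn hKU hK hcover
  have hz₀nhds : UH ∈ 𝓝 z₀ := isOpen_UH.mem_nhds hz₀
  have hlap : hypLap u z₀ ≤ 0 := (hmax.isLocalMax hz₀nhds).hypLap_nonpos (hu.contDiffAt hz₀nhds)
  have hV : 0 ≤ t ^ 2 * z₀.im ^ 4 * ‖φ z₀‖ ^ 2 := by positivity
  have hequiv (hneg : u z₀ ≤ 0) : GaussEq φ t u ↔ ∀ z ∈ UH, hypLap u z
      - (t ^ 2 * z.im ^ 4 * ‖φ z‖ ^ 2) * u z + f₁ (u z) + (t ^ 2 * z.im ^ 4 * ‖φ z‖ ^ 2) * f₂ (u z)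
      = 0 :=
    forall₂_congr fun z hz ↦ by
      rw [modified_lhs_eq_gauss_lhs hf₁eq hf₂eq ((hmax hz).trans hneg)]
  exact ⟨fun h ↦ (hequiv (nonpos_of_gauss_eq hlap hV (h z₀ hz₀))).1 h,
    fun h ↦ (hequiv (nonpos_of_modified_eq hf₁neg hf₂nonpos hlap hV (h z₀ hz₀))).2 h⟩

theorem gauss_equation_equivalent_to_modified_equation
    (Γ : Subgroup (Matrix.SpecialLinearGroup (Fin 2) ℝ))
    (hfree : ∀ γ ∈ Γ, γ ≠ 1 → ∀ z ∈ UH, moebius γ z ≠ z)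
    (hdisc : ∀ K : Set ℂ, K ⊆ UH → IsCompact K →
      {γ : Matrix.SpecialLinearGroup (Fin 2) ℝ | γ ∈ Γ ∧ ((moebius γ '' K) ∩ K).Nonempty}.Finite)
    (hcocompact : ∃ K : Set ℂ, K ⊆ UH ∧ IsCompact K ∧ ∀ z ∈ UH, ∃ γ ∈ Γ, moebius γ z ∈ K)
    (φ : ℂ → ℂ) (hφ : DifferentiableOn ℂ φ UH)
    (hφeq : ∀ γ ∈ Γ, ∀ z ∈ UH,
      φ (moebius γ z) = (((γ 1 0 : ℝ) : ℂ) * z + ((γ 1 1 : ℝ) : ℂ)) ^ 4 * φ z)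
    (t : ℝ) (ht : 0 < t)
    (f₁ f₂ : ℝ → ℝ) (hf₁cont : Continuous f₁) (hf₂cont : Continuous f₂)
    (hf₁eq : ∀ s ≤ (0 : ℝ), f₁ s = 1 - Real.exp (2 * s))
    (hf₁neg : ∀ s > (0 : ℝ), f₁ s < 0)
    (hf₂eq : ∀ s ≤ (0 : ℝ), f₂ s = s - Real.exp (-2 * s))
    (hf₂nonpos : ∀ s : ℝ, f₂ s ≤ 0)
    (u : ℂ → ℝ) (hu : ContDiffOn ℝ 2 u UH) (huinv : GammaInv Γ u) :
    GaussEq φ t u ↔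
      ∀ z ∈ UH, hypLap u z - (t ^ 2 * z.im ^ 4 * ‖φ z‖ ^ 2) * u z
        + f₁ (u z) + (t ^ 2 * z.im ^ 4 * ‖φ z‖ ^ 2) * f₂ (u z) = 0 :=
  gauss_equation_equivalent_to_modified_equation_general Γ hcocompact φ t f₁ f₂ hf₁eq hf₁neg hf₂eq
    hf₂nonpos u hu huinv

end
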